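/- arXiv:2404.04512 — 2 statements merged into one kernel-verified Lean document; each statement's English description precedes it below -/
import Mathlib

section
/- Let n be a positive integer, m ≥ n, and suppose rational coefficients b_λ (for partitions λ of n) and c_α (for compositions α of n) satisfy Σ_{λ ⊢ n} b_λ s_λ(x1,…,xm) = Σ_{α ⊨ n} c_α F_α(x1,…,xm), with not all c_α zero. If ν is the lexicographically greatest composition of n with c_ν ≠ 0, then ν is a partition and b_ν = c_ν. -/
/-
Take the coefficient of `x^α` on both sides, for every composition `α` of `n` (it has at most
`n ≤ m` parts). On the Schur side it is `∑_λ b_λ K_{λα}`, where `K_{λα}` counts the tableaux of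
shape `λ` and content `α`: in a tableau of partition shape the entries of row `i` exceed `i`, so
all entries `≤ j` lie in the first `j` rows, whence `K_{λα} = 0` for `λ <lex α`, and `K_{λλ} = 1`.
On the quasisymmetric side it is `∑_γ c_γ [D(γ) ⊆ D(α)]`, because the weakly increasing word
of content `α` is unique and ascends exactly at `D(α)`; moreover `D(γ) ⊆ D(α)`, `γ ≠ α` forces
`α <lex γ`. Both expansions are therefore unitriangular for the lexicographic order, and
comparing their lex-leading terms gives the claim.
-/

/-- A semistandard Young tableau (French notation) of shape given by the list `l` of row
lengths (row `0` is the bottom row).  Entries are positive integers; rows weakly increase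
from left to right and columns strictly increase from bottom to top (entries outside the
shape are recorded as `0`). -/
structure SSYT (l : List ℕ) where
  entry : ℕ → ℕ → ℕ
  pos : ∀ i j, j < l.getD i 0 → 1 ≤ entry i j
  zeros : ∀ i j, ¬ j < l.getD i 0 → entry i j = 0
  rowWeak : ∀ i j1 j2, j1 ≤ j2 → j2 < l.getD i 0 → entry i j1 ≤ entry i j2
  colStrict : ∀ i1 i2 j, i1 < i2 → j < l.getD i2 0 → entry i1 j < entry i2 j

/-- The cells of the Young diagram of `l`. -/
def cellsOf (l : List ℕ) : Finset (ℕ × ℕ) :=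
  (Finset.range l.length).biUnion fun i =>
    (Finset.range (l.getD i 0)).image fun j => (i, j)

/-- The number of entries of `T` equal to `k`. -/
def wtOf {l : List ℕ} (T : SSYT l) (k : ℕ) : ℕ :=
  ((cellsOf l).filter fun c => T.entry c.1 c.2 = k).card

/-- A tableau is quasi-Yamanouchi if whenever a value `k > 1` appears, some entry equal
to `k` lies in a strictly higher row than some entry equal to `k - 1`. -/
def IsQYT {l : List ℕ} (T : SSYT l) : Prop :=
  ∀ k, 2 ≤ k → (∃ c ∈ cellsOf l, T.entry c.1 c.2 = k) →
    ∃ c ∈ cellsOf l, ∃ c' ∈ cellsOf l,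
      T.entry c.1 c.2 = k ∧ T.entry c'.1 c'.2 = k - 1 ∧ c'.1 < c.1

/-- `QK l α` : the number of quasi-Yamanouchi tableaux of shape `l` and weight `α`. -/
noncomputable def QK (l α : List ℕ) : ℕ :=
  Set.ncard {T : SSYT l | IsQYT T ∧ ∀ i, wtOf T (i + 1) = α.getD i 0}

/-- `l` is (the list of parts of) a partition of `n`. -/
def IsPartitionOf (n : ℕ) (l : List ℕ) : Prop :=
  l.Pairwise (· ≥ ·) ∧ (∀ x ∈ l, 0 < x) ∧ l.sum = n

/-- `l` is (the list of parts of) a composition of `n`. -/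
def IsCompositionOf (n : ℕ) (l : List ℕ) : Prop :=
  (∀ x ∈ l, 0 < x) ∧ l.sum = n

/-- The number of semistandard Young tableaux of shape `l` with entries in `{1,…,m}` and
exactly `d v` entries equal to `v + 1`. -/
noncomputable def ssytCount (m : ℕ) (l : List ℕ) (d : Fin m → ℕ) : ℕ :=
  Set.ncard {T : SSYT l | (∀ c ∈ cellsOf l, T.entry c.1 c.2 ≤ m) ∧
    ∀ v : Fin m, wtOf T ((v : ℕ) + 1) = d v}

open MvPolynomial in
/-- The Schur polynomial `s_l(x_1,…,x_m)`: the weight generating function of semistandard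
Young tableaux of shape `l` with entries in `{1,…,m}`. -/
noncomputable def schurPoly (m : ℕ) (l : List ℕ) : MvPolynomial (Fin m) ℚ :=
  ∑ d : Fin m → Fin (l.sum + 1),
    (ssytCount m l (fun v => (d v : ℕ)) : ℚ) • ∏ v : Fin m, X v ^ ((d v : ℕ))

/-- The descent set `{α₁, α₁+α₂, …, α₁+⋯+α_{k-1}}` of a composition `α` with `k` parts. -/
def descentSet (α : List ℕ) : Finset ℕ :=
  (Finset.range (α.length - 1)).image fun k => (α.take (k + 1)).sum

open MvPolynomial in
/-- The fundamental quasisymmetric polynomial `F_α(x_1,…,x_m)`: the sum of the monomials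
`x_{i₁} ⋯ x_{i_n}` over weakly increasing sequences `1 ≤ i₁ ≤ ⋯ ≤ i_n ≤ m` (coded by
`f : Fin n → Fin m`, `n = α.sum`) which increase strictly at the positions of the descent
set of `α`. -/
noncomputable def Fqs (m : ℕ) (α : List ℕ) : MvPolynomial (Fin m) ℚ :=
  ∑ f ∈ Finset.univ.filter (fun f : Fin α.sum → Fin m =>
      (∀ p q : Fin α.sum, p ≤ q → f p ≤ f q) ∧
      (∀ p q : Fin α.sum, (p : ℕ) + 1 = (q : ℕ) → ((p : ℕ) + 1) ∈ descentSet α → f p < f q)),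
    ∏ p : Fin α.sum, X (f p)

instance (n : ℕ) : DecidableEq (Composition n) := fun a b =>
  decidable_of_iff (a.blocks = b.blocks) (by
    constructor
    · intro h; ext1; exact h
    · intro h; rw [h])

/-- The partitions of `n`, realized as compositions of `n` with weakly decreasing parts. -/
abbrev PartitionList (n : ℕ) := {c : Composition n // c.blocks.Pairwise (· ≥ ·)}

open Finset

/-- If two expansions in bases that are unitriangular with respect to the same order agree,
their leading coefficients agree. -/
theorem exists_eq_of_unitriangular {P C Λ R : Type*} [Fintype P] [Fintype C] [LinearOrder Λ]
    [Semiring R] {ι : P → C} {κ : C → Λ} (hι : ι.Injective) (hκ : κ.Injective)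
    {K : P → C → R} {M : C → C → R}
    (hK : ∀ p α, κ (ι p) < κ α → K p α = 0) (hK1 : ∀ p, K p (ι p) = 1)
    (hM : ∀ γ α, κ γ < κ α → M γ α = 0) (hM1 : ∀ α, M α α = 1)
    {b : P → R} {c : C → R} (heq : ∀ α, ∑ p, b p * K p α = ∑ γ, c γ * M γ α)
    {ν : C} (hν : c ν ≠ 0) (hmax : ∀ γ, c γ ≠ 0 → γ ≠ ν → κ γ < κ ν) :
    ∃ p, ι p = ν ∧ b p = c ν := by
  classical
  have hcν : ∑ γ, c γ * M γ ν = c ν := by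
    refine (sum_eq_single ν (fun γ _ hγ => ?_) (by simp)).trans (by rw [hM1, mul_one])
    by_cases hc : c γ = 0
    · rw [hc, zero_mul]
    · rw [hM γ ν (hmax γ hc hγ), mul_zero]
  obtain ⟨p, -, hp⟩ := exists_ne_zero_of_sum_ne_zero ((heq ν).trans hcν ▸ hν)
  obtain ⟨μ, hμ, hμmax⟩ := exists_max_image {p | b p ≠ 0} (κ ∘ ι)
    ⟨p, mem_filter.2 ⟨mem_univ _, left_ne_zero_of_mul hp⟩⟩
  replace hμ : b μ ≠ 0 := (mem_filter.1 hμ).2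
  have hbμ : ∑ p, b p * K p (ι μ) = b μ := by
    refine (sum_eq_single μ (fun p _ hp => ?_) (by simp)).trans (by rw [hK1, mul_one])
    by_cases hb : b p = 0
    · rw [hb, zero_mul]
    · rw [hK p (ι μ) ((hμmax p (by simpa)).lt_of_ne fun h => hp (hι (hκ h))), mul_zero]
  have hνμ : κ ν ≤ κ (ι μ) :=
    (not_lt.1 fun h => right_ne_zero_of_mul hp (hK p ν h)).trans
      (hμmax p (by simpa using left_ne_zero_of_mul hp))
  obtain ⟨γ, -, hγ⟩ := exists_ne_zero_of_sum_ne_zero ((heq (ι μ)).symm.trans hbμ ▸ hμ)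
  have hμν : κ (ι μ) ≤ κ ν := by
    refine (not_lt.1 fun h => right_ne_zero_of_mul hγ (hM γ (ι μ) h)).trans ?_
    rcases eq_or_ne γ ν with rfl | hne
    · exact le_rfl
    · exact (hmax γ (left_ne_zero_of_mul hγ) hne).le
  have hιμ : ι μ = ν := hκ (hμν.antisymm hνμ)
  exact ⟨μ, hιμ, by rw [← hbμ, heq, hιμ, hcν]⟩

theorem sum_take_eq_sum_range_getD (l : List ℕ) (j : ℕ) :
    (l.take j).sum = ∑ i ∈ range j, l.getD i 0 := by
  induction l generalizing j with
  | nil => simp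
  | cons x l ih =>
    cases j with
    | zero => simp
    | succ j => simp [sum_range_succ', ih, add_comm]

theorem exists_sum_take_lt_of_lt {u w : List ℕ} (h : u < w) (hw : ∀ x ∈ w, 0 < x) :
    ∃ j < w.length, (u.take (j + 1)).sum < (w.take (j + 1)).sum := by
  induction h with
  | nil => exact ⟨0, by simp, by simpa using hw _ List.mem_cons_self⟩
  | rel h => exact ⟨0, by simp, by simpa using h⟩
  | cons _ ih =>
    obtain ⟨j, hj, hlt⟩ := ih fun x hx => hw x (List.mem_cons_of_mem _ hx)
    exact ⟨j + 1, by simpa using hj, by simpa using hlt⟩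

theorem List.Pairwise.getD_succ_le {l : List ℕ} (hl : l.Pairwise (· ≥ ·)) (i : ℕ) :
    l.getD (i + 1) 0 ≤ l.getD i 0 := by
  by_cases hi : i + 1 < l.length
  · rw [List.getD_eq_getElem _ _ hi, List.getD_eq_getElem _ _ (by omega)]
    exact List.pairwise_iff_getElem.1 hl i (i + 1) _ _ (Nat.lt_succ_self i)
  · rw [List.getD_eq_default _ _ (by omega)]
    exact Nat.zero_le _

theorem mem_cellsOf {l : List ℕ} {c : ℕ × ℕ} : c ∈ cellsOf l ↔ c.2 < l.getD c.1 0 := by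
  obtain ⟨i, j⟩ := c
  simp only [cellsOf, mem_biUnion, mem_range, mem_image, Prod.mk.injEq]
  constructor
  · rintro ⟨i, -, j, hj, rfl, rfl⟩
    exact hj
  · intro h
    refine ⟨i, ?_, j, h, rfl, rfl⟩
    by_contra! hi
    rw [List.getD_eq_default _ _ hi] at h
    exact Nat.not_lt_zero _ h

theorem fst_lt_length_of_mem_cellsOf {l : List ℕ} {c : ℕ × ℕ} (hc : c ∈ cellsOf l) :
    c.1 < l.length := by
  obtain ⟨i, hi, j, -, rfl⟩ := by simpa only [cellsOf, mem_biUnion, mem_image] using hc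
  exact mem_range.1 hi

theorem card_cellsOf (l : List ℕ) : #(cellsOf l) = l.sum := by
  rw [cellsOf, card_biUnion, ← List.take_length (l := l), sum_take_eq_sum_range_getD,
    List.take_length]
  · simp [card_image_of_injective _ (Prod.mk_right_injective _)]
  · intro i _ i' _ hne
    simp [disjoint_left, hne.symm]

theorem filter_cellsOf_row_lt (l : List ℕ) (j : ℕ) :
    {c ∈ cellsOf l | c.1 < j} = cellsOf (l.take j) := by
  ext ⟨i, k⟩
  simp only [mem_filter, mem_cellsOf, List.getD_eq_getElem?_getD, List.getElem?_take]
  split_ifs with h <;> simp [h]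

theorem card_filter_cellsOf_row_lt (l : List ℕ) (j : ℕ) :
    #{c ∈ cellsOf l | c.1 < j} = (l.take j).sum := by
  rw [filter_cellsOf_row_lt, card_cellsOf]

theorem card_filter_cellsOf_row_eq (l : List ℕ) (i : ℕ) :
    #{c ∈ cellsOf l | c.1 = i} = l.getD i 0 := by
  have : {c ∈ cellsOf l | c.1 = i} = (range (l.getD i 0)).image (i, ·) := by
    ext ⟨i', j⟩
    simp only [mem_filter, mem_cellsOf, mem_image, mem_range, Prod.mk.injEq]
    constructor
    · rintro ⟨h, rfl⟩
      exact ⟨j, h, rfl, rfl⟩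
    · rintro ⟨j, h, rfl, rfl⟩
      exact ⟨h, rfl⟩
  rw [this, card_image_of_injective _ (Prod.mk_right_injective _), card_range]

namespace SSYT

variable {l : List ℕ}

theorem ext {T U : SSYT l} (h : T.entry = U.entry) : T = U := by
  cases T
  cases U
  cases h
  rfl

theorem row_lt_entry (hl : l.Pairwise (· ≥ ·)) (T : SSYT l) {i j : ℕ} (h : j < l.getD i 0) :
    i < T.entry i j := by
  induction i with
  | zero => exact T.pos 0 j h
  | succ i ih =>
    exact Nat.lt_of_le_of_lt (ih (h.trans_le (hl.getD_succ_le i)))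
      (T.colStrict i (i + 1) j i.lt_succ_self h)

theorem filter_entry_le_subset (hl : l.Pairwise (· ≥ ·)) (T : SSYT l) (j : ℕ) :
    {c ∈ cellsOf l | T.entry c.1 c.2 ≤ j} ⊆ {c ∈ cellsOf l | c.1 < j} :=
  monotone_filter_right _ fun _ hc hle => (T.row_lt_entry hl (mem_cellsOf.1 hc)).trans_le hle

theorem card_filter_entry_le (T : SSYT l) (j : ℕ) :
    #{c ∈ cellsOf l | T.entry c.1 c.2 ≤ j} = ∑ k ∈ range j, wtOf T (k + 1) := by
  have hpos : ∀ c ∈ cellsOf l, 1 ≤ T.entry c.1 c.2 := fun c hc => T.pos c.1 c.2 (mem_cellsOf.1 hc)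
  rw [card_eq_sum_card_fiberwise (f := fun c => T.entry c.1 c.2 - 1) (t := range j)]
  · refine sum_congr rfl fun k hk => ?_
    rw [wtOf, filter_filter]
    refine congrArg card (filter_congr fun c hc => ?_)
    have := hpos c hc
    have := mem_range.1 hk
    omega
  · intro c hc
    have := hpos c (mem_filter.1 hc).1
    have := (mem_filter.1 hc).2
    simp only [coe_range, Set.mem_Iio]
    omega

theorem card_filter_entry_le_of_wtOf {w : List ℕ} {m : ℕ} (T : SSYT l)
    (hw : ∀ v : Fin m, wtOf T (v + 1) = w.getD v 0) {j : ℕ} (hj : j ≤ m) :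
    #{c ∈ cellsOf l | T.entry c.1 c.2 ≤ j} = (w.take j).sum := by
  rw [T.card_filter_entry_le, sum_take_eq_sum_range_getD]
  exact sum_congr rfl fun k hk => hw ⟨k, (mem_range.1 hk).trans_le hj⟩

def highestWeight (hl : l.Pairwise (· ≥ ·)) : SSYT l where
  entry i j := if j < l.getD i 0 then i + 1 else 0
  pos i j h := by simp only [h, if_true, le_add_iff_nonneg_left, zero_le]
  zeros i j h := by simp only [h, if_false]
  rowWeak i j₁ j₂ h h₂ := by simp only [h₂, h.trans_lt h₂, if_true, le_refl]
  colStrict i₁ i₂ j h h₂ := by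
    have h₁ : j < l.getD i₁ 0 := by
      induction i₂, h using Nat.le_induction with
      | base => exact h₂.trans_le (hl.getD_succ_le i₁)
      | succ i₂ _ ih => exact ih (h₂.trans_le (hl.getD_succ_le i₂))
    simpa only [h₁, h₂, if_true, add_lt_add_iff_right]

theorem highestWeight_entry_of_mem {hl : l.Pairwise (· ≥ ·)} {c : ℕ × ℕ} (hc : c ∈ cellsOf l) :
    (highestWeight hl).entry c.1 c.2 = c.1 + 1 :=
  if_pos (mem_cellsOf.1 hc)

theorem wtOf_highestWeight (hl : l.Pairwise (· ≥ ·)) (k : ℕ) :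
    wtOf (highestWeight hl) (k + 1) = l.getD k 0 := by
  rw [wtOf, ← card_filter_cellsOf_row_eq]
  congr 1
  refine filter_congr fun c hc => ?_
  rw [highestWeight_entry_of_mem hc, Nat.add_right_cancel_iff]

theorem eq_highestWeight (hl : l.Pairwise (· ≥ ·)) {m : ℕ} (hm : l.length ≤ m) (T : SSYT l)
    (hT : ∀ v : Fin m, wtOf T (v + 1) = l.getD v 0) : T = highestWeight hl := by
  have hrows : ∀ k ≤ m, {c ∈ cellsOf l | T.entry c.1 c.2 ≤ k} = {c ∈ cellsOf l | c.1 < k} :=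
    fun k hk => eq_of_subset_of_card_le (T.filter_entry_le_subset hl k) <| by
      rw [card_filter_cellsOf_row_lt, T.card_filter_entry_le_of_wtOf hT hk]
  refine ext (funext₂ fun i j => ?_)
  by_cases hij : j < l.getD i 0
  · have hc : (i, j) ∈ cellsOf l := mem_cellsOf.2 hij
    have hle := (mem_filter.1 ((hrows (i + 1) ((fst_lt_length_of_mem_cellsOf hc).trans_le hm)).symm ▸
      mem_filter.2 ⟨hc, i.lt_succ_self⟩)).2
    rw [highestWeight_entry_of_mem hc]
    exact le_antisymm hle (T.row_lt_entry hl hij)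
  · rw [T.zeros i j hij, (highestWeight hl).zeros i j hij]

end SSYT

theorem ssytCount_eq_zero_of_lt {m : ℕ} {l α : List ℕ} (hl : l.Pairwise (· ≥ ·))
    (hα : ∀ x ∈ α, 0 < x) (hm : α.length ≤ m) (h : l < α) :
    ssytCount m l (fun v => α.getD v 0) = 0 := by
  obtain ⟨j, hj, hlt⟩ := exists_sum_take_lt_of_lt h hα
  rw [ssytCount]
  convert Set.ncard_empty (SSYT l)
  refine Set.eq_empty_of_forall_notMem fun T hT => hlt.not_ge ?_
  rw [← T.card_filter_entry_le_of_wtOf hT.2 (j := j + 1) (by omega), ← card_filter_cellsOf_row_lt]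
  exact card_le_card (T.filter_entry_le_subset hl _)

theorem ssytCount_self {m : ℕ} {l : List ℕ} (hl : l.Pairwise (· ≥ ·)) (hm : l.length ≤ m) :
    ssytCount m l (fun v => l.getD v 0) = 1 := by
  rw [ssytCount, Set.ncard_eq_one]
  refine ⟨SSYT.highestWeight hl, Set.eq_singleton_iff_unique_mem.2 ⟨⟨fun c hc => ?_,
    fun v => SSYT.wtOf_highestWeight hl v⟩, fun T hT => SSYT.eq_highestWeight hl hm T hT.2⟩⟩
  rw [SSYT.highestWeight_entry_of_mem hc]
  exact (fst_lt_length_of_mem_cellsOf hc).trans_le hm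

theorem descentSet_singleton (x : ℕ) : descentSet [x] = ∅ := rfl

theorem descentSet_cons_cons (x y : ℕ) (a : List ℕ) :
    descentSet (x :: y :: a) = insert x ((descentSet (y :: a)).image (x + ·)) := by
  ext s
  simp only [descentSet, List.length_cons, Nat.add_sub_cancel, mem_image, mem_range, mem_insert]
  constructor
  · rintro ⟨_ | k, hk, rfl⟩
    · simp
    · exact Or.inr ⟨_, ⟨k, by omega, rfl⟩, by simp⟩
  · rintro (rfl | ⟨_, ⟨k, hk, rfl⟩, rfl⟩)
    · exact ⟨0, by omega, by simp⟩
    · exact ⟨k + 1, by omega, by simp⟩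

theorem le_of_mem_descentSet_cons {x s : ℕ} {a : List ℕ} (hs : s ∈ descentSet (x :: a)) :
    x ≤ s := by
  obtain ⟨k, -, rfl⟩ := mem_image.1 hs
  simp

theorem lt_of_descentSet_subset : ∀ {u w : List ℕ}, (∀ x ∈ u, 0 < x) → (∀ y ∈ w, 0 < y) →
    u.sum = w.sum → descentSet u ⊆ descentSet w → u ≠ w → w < u
  | [], [], _, _, _, _, hne => absurd rfl hne
  | [], y :: _, _, hw, hsum, _, _ => by
    have := hw y (by simp)
    simp at hsum
    omega
  | x :: _, [], hu, _, hsum, _, _ => by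
    have := hu x (by simp)
    simp at hsum
    omega
  | [x], [y], _, _, hsum, _, hne => absurd (by simp_all) hne
  | [x], y :: y' :: w, _, hw, hsum, _, _ => by
    have := hw y' (by simp)
    refine List.Lex.rel ?_
    simp at hsum
    omega
  | x :: z :: u, [y], _, _, _, hsub, _ => by
    simpa [descentSet_cons_cons, descentSet_singleton] using @hsub x
  | x :: z :: u, y :: y' :: w, hu, hw, hsum, hsub, hne => by
    have hx : x ∈ descentSet (y :: y' :: w) := hsub (by simp [descentSet_cons_cons])
    rw [descentSet_cons_cons] at hx
    rcases mem_insert.1 hx with rfl | hx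
    · refine List.Lex.cons (lt_of_descentSet_subset (fun a ha => hu a (by simp [ha]))
        (fun a ha => hw a (by simp [ha])) (by simpa using hsum) (fun t ht => ?_)
        (fun h => hne (by rw [h])))
      have hxt := hsub (by
        rw [descentSet_cons_cons]; exact mem_insert_of_mem (mem_image_of_mem (x + ·) ht))
      have := (le_of_mem_descentSet_cons ht).trans_lt' (hu z (by simp))
      rw [descentSet_cons_cons, mem_insert, mem_image] at hxt
      obtain h | ⟨s, hs, hst⟩ := hxt
      · omega
      · exact (add_left_cancel hst : s = t) ▸ hs
    · obtain ⟨t, ht, rfl⟩ := mem_image.1 hx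
      have h₁ : y' ≤ t := le_of_mem_descentSet_cons ht
      have h₂ : 0 < y' := hw y' (by simp)
      exact List.Lex.rel (by omega)

theorem Monotone.eq_of_card_fiber_eq {β : Type*} [LinearOrder β] {N : ℕ} {f g : Fin N → β}
    (hf : Monotone f) (hg : Monotone g) (h : ∀ v, #{p | f p = v} = #{p | g p = v}) : f = g := by
  classical
  refine List.ofFn_injective (List.Perm.eq_of_sortedLE hf.sortedLE_ofFn hg.sortedLE_ofFn ?_)
  rw [← Multiset.coe_eq_coe, ← Fin.univ_val_map, ← Fin.univ_val_map]
  ext v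
  simp only [Multiset.count_map, ← filter_val, card_val, eq_comm (a := v)]
  exact h v

namespace Composition

variable {n : ℕ} (c : Composition n)

theorem getD_blocks_le (v : ℕ) : c.blocks.getD v 0 ≤ n := by
  by_cases hv : v < c.blocks.length
  · rw [List.getD_eq_getElem _ _ hv]
    exact c.blocks_le (List.getElem_mem hv)
  · rw [List.getD_eq_default _ _ (not_lt.1 hv)]
    exact Nat.zero_le n

theorem mem_descentSet_bounds {s : ℕ} (hs : s ∈ descentSet c.blocks) : 0 < s ∧ s < n := by
  obtain ⟨k, hk, rfl⟩ := mem_image.1 hs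
  rw [mem_range, blocks_length] at hk
  change 0 < c.sizeUpTo (k + 1) ∧ c.sizeUpTo (k + 1) < n
  have h₀ : c.sizeUpTo 0 < c.sizeUpTo 1 := c.sizeUpTo_strict_mono (by omega)
  have h₁ : c.sizeUpTo 1 ≤ c.sizeUpTo (k + 1) := c.monotone_sizeUpTo (by omega)
  have h₂ : c.sizeUpTo (k + 1) < c.sizeUpTo (k + 2) := c.sizeUpTo_strict_mono (by omega)
  have h₃ := c.sizeUpTo_le (k + 2)
  rw [sizeUpTo_zero] at h₀
  omega

theorem index_eq_iff {j : Fin n} {i : Fin c.length} :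
    c.index j = i ↔ c.sizeUpTo i ≤ j ∧ (j : ℕ) < c.sizeUpTo (i + 1) := by
  rw [eq_comm, ← mem_range_embedding_iff', mem_range_embedding_iff]

theorem monotone_index : Monotone c.index := by
  intro j j' h
  by_contra! hlt
  have h₁ : c.sizeUpTo (c.index j' + 1) ≤ c.sizeUpTo (c.index j) :=
    c.monotone_sizeUpTo (Nat.succ_le_of_lt hlt)
  have h₂ : (j' : ℕ) < c.sizeUpTo (c.index j' + 1) := c.lt_sizeUpTo_index_succ j'
  have h₃ := c.sizeUpTo_index_le j
  have h₄ : (j : ℕ) ≤ j' := h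
  omega

theorem card_index_eq (i : Fin c.length) : #{j | c.index j = i} = c.blocksFun i := by
  have : ({j | c.index j = i} : Finset (Fin n)) = univ.map (c.embedding i).toEmbedding := by
    ext j
    simp [eq_comm (a := c.index j), ← mem_range_embedding_iff']
  rw [this, card_map, card_univ, Fintype.card_fin]

theorem card_castLE_index_eq {m : ℕ} (hm : c.length ≤ m) (v : Fin m) :
    #{j | Fin.castLE hm (c.index j) = v} = c.blocks.getD v 0 := by
  by_cases hv : (v : ℕ) < c.length
  · rw [show v = Fin.castLE hm ⟨v, hv⟩ from rfl]
    simp only [Fin.castLE_inj, card_index_eq]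
    rw [List.getD_eq_getElem]
    rfl
  · rw [List.getD_eq_default _ _ (by simpa using hv), card_eq_zero, filter_eq_empty_iff]
    rintro j - rfl
    exact hv (c.index j).2

theorem index_lt_index_iff {j j' : Fin n} (h : (j : ℕ) + 1 = j') :
    c.index j < c.index j' ↔ (j' : ℕ) ∈ descentSet c.blocks := by
  simp only [descentSet, mem_image, mem_range]
  constructor
  · intro hlt
    have hj' : c.sizeUpTo (c.index j') = j' := by
      refine (c.sizeUpTo_index_le j').antisymm (not_lt.1 fun hle => hlt.ne ?_)
      have := c.lt_sizeUpTo_index_succ j'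
      exact (c.index_eq_iff).2 ⟨by omega, by simp only [Fin.val_succ] at this; omega⟩
    refine ⟨c.index j' - 1, by simp only [blocks_length]; omega, ?_⟩
    rw [Nat.sub_add_cancel (by omega)]
    exact hj'
  · rintro ⟨k, hk, hkj'⟩
    rw [blocks_length] at hk
    have hidx : c.index j' = ⟨k + 1, by omega⟩ := by
      refine (c.index_eq_iff).2 ⟨hkj'.le, ?_⟩
      exact hkj' ▸ c.sizeUpTo_strict_mono (by omega)
    rw [hidx, Fin.lt_def]
    by_contra! hle
    have h₁ : c.sizeUpTo (k + 1) ≤ c.sizeUpTo (c.index j) := c.monotone_sizeUpTo hle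
    have h₂ := c.sizeUpTo_index_le j
    change c.sizeUpTo (k + 1) = j' at hkj'
    omega

end Composition

open MvPolynomial

noncomputable def listExponent (m : ℕ) (α : List ℕ) : Fin m →₀ ℕ :=
  Finsupp.equivFunOnFinite.symm fun v => α.getD v 0

theorem prod_X_pow_eq_monomial_equivFunOnFinite {m : ℕ} (d : Fin m → ℕ) :
    ∏ v, (X v : MvPolynomial (Fin m) ℚ) ^ d v = monomial (Finsupp.equivFunOnFinite.symm d) 1 := by
  simp [X_pow_eq_monomial, ← monomial_sum_one, Finsupp.equivFunOnFinite_symm_eq_sum]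

theorem prod_X_eq_monomial_sum_single {m N : ℕ} (f : Fin N → Fin m) :
    ∏ p, (X (f p) : MvPolynomial (Fin m) ℚ) = monomial (∑ p, Finsupp.single (f p) 1) 1 := by
  rw [monomial_sum_one]
  rfl

theorem sum_single_eq_listExponent_iff {m N : ℕ} (f : Fin N → Fin m) (α : List ℕ) :
    ∑ p, Finsupp.single (f p) 1 = listExponent m α ↔ ∀ v, #{p | f p = v} = α.getD v 0 := by
  classical
  simp [DFunLike.ext_iff, listExponent, Finsupp.single_apply]

theorem coeff_listExponent_schurPoly {m : ℕ} (l α : List ℕ) (hα : ∀ v, α.getD v 0 ≤ l.sum) :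
    coeff (listExponent m α) (schurPoly m l) = ssytCount m l (fun v => α.getD v 0) := by
  classical
  rw [schurPoly, coeff_sum, sum_eq_single (fun v => ⟨α.getD v 0, Nat.lt_succ_of_le (hα v)⟩)]
  · simp [prod_X_pow_eq_monomial_equivFunOnFinite, listExponent]
  · intro e _ he
    simp only [prod_X_pow_eq_monomial_equivFunOnFinite, coeff_smul, coeff_monomial, smul_eq_mul,
      mul_ite, mul_one, mul_zero, ite_eq_right_iff]
    intro h
    exact absurd (funext fun v => Fin.ext (DFunLike.congr_fun h v)) he
  · simp

theorem coeff_listExponent_Fqs {n m : ℕ} (a α : Composition n) (hm : α.length ≤ m) :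
    coeff (listExponent m α.blocks) (Fqs m a.blocks)
      = if descentSet a.blocks ⊆ descentSet α.blocks then 1 else 0 := by
  classical
  obtain ⟨a, ha, rfl⟩ := a
  set g : Fin a.sum → Fin m := fun p => Fin.castLE hm (α.index p)
  have hg : Monotone g := fun p q h => (Fin.castLE_le_castLE_iff hm).2 (α.monotone_index h)
  have hcontent : ∀ f : Fin a.sum → Fin m, Monotone f →
      (∑ p, Finsupp.single (f p) 1 = listExponent m α.blocks ↔ f = g) := by
    intro f hf
    rw [sum_single_eq_listExponent_iff]
    refine ⟨fun h => hf.eq_of_card_fiber_eq hg fun v => ?_, ?_⟩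
    · rw [h, α.card_castLE_index_eq hm]
    · rintro rfl
      exact α.card_castLE_index_eq hm
  have hascent : ∀ p q : Fin a.sum, (p : ℕ) + 1 = q →
      (g p < g q ↔ (q : ℕ) ∈ descentSet α.blocks) :=
    fun p q h => (Fin.castLE_lt_castLE_iff hm).trans (α.index_lt_index_iff h)
  have hstrict : (∀ p q : Fin a.sum, (p : ℕ) + 1 = q → (p : ℕ) + 1 ∈ descentSet a → g p < g q) ↔
      descentSet a ⊆ descentSet α.blocks := by
    refine ⟨fun h s hs => ?_, fun h p q hpq hp => (hascent p q hpq).2 (hpq ▸ h hp)⟩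
    obtain ⟨hs₀, hs⟩ := Composition.mem_descentSet_bounds ⟨a, ha, rfl⟩ hs
    exact (hascent ⟨s - 1, by omega⟩ ⟨s, hs⟩ (by simp; omega)).1
      (h _ _ (by simp; omega) (by simpa [Nat.sub_add_cancel hs₀]))
  rw [Fqs, coeff_sum]
  simp only [prod_X_eq_monomial_sum_single, coeff_monomial]
  rw [sum_congr rfl fun f hf => if_congr (hcontent f fun p q h => (mem_filter.1 hf).2.1 p q h)
    rfl rfl, sum_ite_eq']
  simp only [mem_filter, mem_univ, true_and]
  exact if_congr ((and_iff_right fun p q h => hg h).trans hstrict) rfl rfl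

theorem sum_mul_ssytCount_eq_sum_mul_ite_descentSet_subset {n m : ℕ} (hm : n ≤ m)
    {b : PartitionList n → ℚ} {c : Composition n → ℚ}
    (heq : ∑ p : PartitionList n, b p • schurPoly m p.1.blocks
         = ∑ α : Composition n, c α • Fqs m α.blocks) (α : Composition n) :
    ∑ p : PartitionList n, b p * ssytCount m p.1.blocks (fun v => α.blocks.getD v 0)
      = ∑ γ, c γ * if descentSet γ.blocks ⊆ descentSet α.blocks then 1 else 0 := by
  calc ∑ p : PartitionList n, b p * ssytCount m p.1.blocks (fun v => α.blocks.getD v 0)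
      = ∑ p : PartitionList n, b p * coeff (listExponent m α.blocks) (schurPoly m p.1.blocks) :=
        sum_congr rfl fun p _ => by
          rw [coeff_listExponent_schurPoly _ _ fun v => p.1.blocks_sum.symm ▸ α.getD_blocks_le v]
    _ = ∑ γ, c γ * coeff (listExponent m α.blocks) (Fqs m γ.blocks) := by
        simpa only [coeff_sum, coeff_smul, smul_eq_mul] using
          congrArg (coeff (listExponent m α.blocks)) heq
    _ = _ := sum_congr rfl fun γ _ => by rw [coeff_listExponent_Fqs _ _ (α.length_le.trans hm)]

theorem leading_coefficient_eq_general (n m : ℕ) (hm : n ≤ m)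
    (b : PartitionList n → ℚ) (c : Composition n → ℚ)
    (heq : ∑ p : PartitionList n, b p • schurPoly m p.1.blocks
         = ∑ α : Composition n, c α • Fqs m α.blocks)
    (ν : Composition n) (hν : c ν ≠ 0)
    (hmax : ∀ α : Composition n, c α ≠ 0 → α ≠ ν → List.Lex (· < ·) α.blocks ν.blocks) :
    ∃ hs : ν.blocks.Pairwise (· ≥ ·), b ⟨ν, hs⟩ = c ν := by
  have hlen : ∀ α : Composition n, α.length ≤ m := fun α => α.length_le.trans hm
  obtain ⟨⟨_, hs⟩, rfl, hb⟩ := exists_eq_of_unitriangular (ι := Subtype.val)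
    (κ := Composition.blocks) Subtype.val_injective (fun _ _ => Composition.ext)
    (K := fun p α => (ssytCount m p.1.blocks (fun v => α.blocks.getD v 0) : ℚ))
    (M := fun γ α => if descentSet γ.blocks ⊆ descentSet α.blocks then 1 else 0)
    (fun p α h => by
      rw [ssytCount_eq_zero_of_lt p.2 (fun _ => α.blocks_pos) (hlen α) h, Nat.cast_zero])
    (fun p => by rw [ssytCount_self p.2 (hlen p.1), Nat.cast_one])
    (fun γ α h => if_neg fun hsub => h.asymm (lt_of_descentSet_subset (fun _ => γ.blocks_pos)
      (fun _ => α.blocks_pos) (by rw [γ.blocks_sum, α.blocks_sum]) hsub h.ne))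
    (fun α => if_pos subset_rfl)
    (sum_mul_ssytCount_eq_sum_mul_ite_descentSet_subset hm heq) hν hmax
  exact ⟨hs, hb⟩

/-- Suppose Σ_{λ ⊢ n} b_λ s_λ(x₁,…,x_m) = Σ_{α ⊨ n} c_α F_α(x₁,…,x_m)
with rational coefficients, m ≥ n.  If ν is the lexicographically greatest composition of
n with c_ν ≠ 0, then ν is a partition and b_ν = c_ν. -/
theorem leading_coefficient_eq (n m : ℕ) (hn : 0 < n) (hm : n ≤ m)
    (b : PartitionList n → ℚ) (c : Composition n → ℚ)
    (heq : ∑ p : PartitionList n, b p • schurPoly m p.1.blocks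
         = ∑ α : Composition n, c α • Fqs m α.blocks)
    (ν : Composition n) (hν : c ν ≠ 0)
    (hmax : ∀ α : Composition n, c α ≠ 0 → α ≠ ν → List.Lex (· < ·) α.blocks ν.blocks) :
    ∃ hs : ν.blocks.Pairwise (· ≥ ·), b ⟨ν, hs⟩ = c ν :=
  leading_coefficient_eq_general n m hm b c heq ν hν hmax
end

section
/- For every h ≥ 1 there exists a symmetric chain decomposition 𝒞 of L(3,h) such that: (a) a partition is the minimal element of a chain of 𝒞 if and only if it lies in L(3,h) and has the form 3^{m3} 1^{m1} with m1 ≥ 3·m3 and m1 ≠ 3·m3 + 1 (equivalently, the form 3^{m3} 1^{m1′ + 3m3} with m1′ ≥ 0 and m1′ ≠ 1); (b) if the minimal element of a chain C ∈ 𝒞 is 3^{m3} 1^{m1 + 3m3} with m1 ≠ 1, then the maximal element of C is 3^{h − m1 − 3m3} 2^{m1} 1^{3m3} when m1 is even, and 3^{h − m1 − 3m3 + 1} 2^{m1 − 2} 1^{3m3 + 1} when m1 is odd; (c) a partition is the maximal element of a chain of 𝒞 if and only if its complement in the 3×h box has the form 2^{m2} 1^{m1} with 3·m1 + 4·m2 ≤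 3h, and (m1 even ⟺ m2 ≡ 0 mod 3) and (m1 odd ⟺ m2 ≡ 1 mod 3). -/
/-- `b` covers `a` in Young's lattice: `a ⊆ b` (componentwise, viewing partitions as
lists of parts padded by zeros) and `b` has exactly one more box than `a`. -/
def CoversBox (a b : List ℕ) : Prop :=
  (∀ i, a.getD i 0 ≤ b.getD i 0) ∧ b.sum = a.sum + 1

/-- The partitions lying in a `w × h` box: largest part at most `w`, at most `h`
parts. -/
def boxSet (w h : ℕ) : Set (List ℕ) :=
  {l | l.Pairwise (· ≥ ·) ∧ (∀ x ∈ l, 0 < x ∧ x ≤ w) ∧ l.length ≤ h}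

/-- `C` is a symmetric chain decomposition of the subset `S` of the partitions in a
`w × h` box: the members of `C` are nonempty saturated chains (recorded as lists,
increasing, consecutive elements differing by adding a single box) of elements of `S`,
the ranks of the minimal and maximal element of each chain sum to `w*h`, and every
element of `S` lies in exactly one chain of `C`. -/
structure IsSCDOn (w h : ℕ) (S : Set (List ℕ)) (C : Set (List (List ℕ))) : Prop where
  nonempty : ∀ c ∈ C, c ≠ []
  subset : ∀ c ∈ C, ∀ l ∈ c, l ∈ S
  saturated : ∀ c ∈ C, c.Chain' CoversBox
  symm : ∀ c ∈ C, c.headI.sum + (c.getLastD []).sum = w * h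
  partitioned : ∀ l ∈ S, ∃! c, c ∈ C ∧ l ∈ c

/-- A symmetric chain decomposition of `L(w,h)`, the poset of all partitions in a
`w × h` box. -/
def IsSCD (w h : ℕ) (C : Set (List (List ℕ))) : Prop :=
  IsSCDOn w h (boxSet w h) C

/-- The complement of `l` in the `w × h` box: the partition
`(w − λ_h, w − λ_{h−1}, …, w − λ_1)`, `l` being padded with zeros to `h` parts. -/
def complementBox (w h : ℕ) (l : List ℕ) : List ℕ :=
  (List.range h).map fun i => w - l.getD (h - 1 - i) 0

/-!
Write the elements of `L(3,h)` as `3^a 2^b 1^c` with `a + b + c ≤ h`; a covering step adds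
a `1`, turns a `1` into a `2`, or turns a `2` into a `3`. The chains are indexed by `(m, k)`
with `k ≠ 1` and `4m + k ≤ h`: chain `(m, k)` runs from `3^m 1^(3m+k)`, of rank `6m + k`, to a
partition of rank `3h - 6m - k`, so it is symmetric. They partition the box because the
parametrisation `(m, k, n) ↦ chainPos m k n` has an explicit inverse `chainCoords`.
-/

def ofCounts (p : ℕ × ℕ × ℕ) : List ℕ :=
  List.replicate p.1 3 ++ List.replicate p.2.1 2 ++ List.replicate p.2.2 1

lemma getD_replicate_append (n x : ℕ) (l : List ℕ) (i : ℕ) :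
    (List.replicate n x ++ l).getD i 0 = if i < n then x else l.getD (i - n) 0 := by
  split_ifs with hi
  · rw [List.getD_append _ _ _ _ (by simpa using hi), List.getD_replicate _ hi]
  · rw [List.getD_append_right _ _ _ _ (by simpa using hi), List.length_replicate]

lemma getD_ofCounts_append_zeros (a b c n i : ℕ) :
    (ofCounts (a, b, c) ++ List.replicate n 0).getD i 0 =
      if i < a then 3 else if i < a + b then 2 else if i < a + b + c then 1 else 0 := by
  simp only [ofCounts, List.append_assoc, getD_replicate_append]
  rw [List.getD_eq_getElem?_getD, List.getElem?_getD_replicate_default_eq]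
  split_ifs <;> omega

lemma getD_ofCounts (a b c i : ℕ) :
    (ofCounts (a, b, c)).getD i 0 =
      if i < a then 3 else if i < a + b then 2 else if i < a + b + c then 1 else 0 := by
  simpa using getD_ofCounts_append_zeros a b c 0 i

lemma sum_ofCounts (a b c : ℕ) : (ofCounts (a, b, c)).sum = 3 * a + 2 * b + c := by
  simp [ofCounts, List.sum_replicate]
  ring

lemma length_ofCounts (a b c : ℕ) : (ofCounts (a, b, c)).length = a + b + c := by
  simp [ofCounts, Nat.add_assoc]

lemma ofCounts_append_zeros_injective :
    Function.Injective fun x : (ℕ × ℕ × ℕ) × ℕ =>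
      ofCounts x.1 ++ List.replicate x.2 0 := by
  rintro ⟨⟨a, b, c⟩, n⟩ ⟨⟨a', b', c'⟩, n'⟩ h
  have hcount (j : ℕ) := congrArg (List.count j) h
  simp only [ofCounts, List.count_append, List.count_replicate, beq_iff_eq] at hcount
  obtain rfl : a = a' := by simpa using hcount 3
  obtain rfl : b = b' := by simpa using hcount 2
  obtain rfl : c = c' := by simpa using hcount 1
  obtain rfl : n = n' := by simpa using hcount 0
  rfl

lemma ofCounts_injective : Function.Injective ofCounts := fun p q h =>
  congrArg Prod.fst <| @ofCounts_append_zeros_injective (p, 0) (q, 0) (by simpa using h)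

lemma mem_ofCounts {a b c x : ℕ} :
    x ∈ ofCounts (a, b, c) ↔ (0 < a ∧ x = 3) ∨ (0 < b ∧ x = 2) ∨ (0 < c ∧ x = 1) := by
  simp only [ofCounts, List.mem_append, List.mem_replicate]
  omega

lemma exists_ofCounts_eq {l : List ℕ} (hsorted : l.Pairwise (· ≥ ·))
    (hparts : ∀ x ∈ l, 0 < x ∧ x ≤ 3) : ∃ p, ofCounts p = l := by
  induction l with
  | nil => exact ⟨(0, 0, 0), rfl⟩
  | cons x l ih =>
    obtain ⟨hx, hsorted⟩ := List.pairwise_cons.1 hsorted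
    obtain ⟨⟨a, b, c⟩, rfl⟩ := ih hsorted fun y hy => hparts y (List.mem_cons_of_mem _ hy)
    have h3 : 0 < a → 3 ≤ x := fun ha => hx 3 (mem_ofCounts.2 (by omega))
    have h2 : 0 < b → 2 ≤ x := fun hb => hx 2 (mem_ofCounts.2 (by omega))
    obtain ⟨hx0, hx3⟩ := hparts x List.mem_cons_self
    interval_cases x
    · obtain ⟨rfl, rfl⟩ : a = 0 ∧ b = 0 := by omega
      exact ⟨(0, 0, c + 1), by simp [ofCounts, List.replicate_succ]⟩
    · obtain rfl : a = 0 := by omega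
      exact ⟨(0, b + 1, c), by simp [ofCounts, List.replicate_succ]⟩
    · exact ⟨(a + 1, b, c), by simp [ofCounts, List.replicate_succ]⟩

lemma mem_boxSet_three_iff {h : ℕ} {l : List ℕ} :
    l ∈ boxSet 3 h ↔ ∃ a b c, a + b + c ≤ h ∧ ofCounts (a, b, c) = l := by
  constructor
  · rintro ⟨hsorted, hparts, hlen⟩
    obtain ⟨⟨a, b, c⟩, rfl⟩ := exists_ofCounts_eq hsorted hparts
    exact ⟨a, b, c, by rwa [length_ofCounts] at hlen, rfl⟩
  · rintro ⟨a, b, c, hs, rfl⟩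
    refine ⟨List.pairwise_iff_getElem.2 fun i j _ hj hij => ?_, fun x hx => ?_, ?_⟩
    · rw [length_ofCounts] at hj
      rw [← List.getD_eq_getElem _ 0, ← List.getD_eq_getElem _ 0, getD_ofCounts, getD_ofCounts]
      split_ifs <;> omega
    · rw [mem_ofCounts] at hx
      omega
    · rwa [length_ofCounts]

lemma coversBox_ofCounts {a b c a' b' c' : ℕ} (h₁ : a ≤ a') (h₂ : a + b ≤ a' + b')
    (h₃ : a + b + c ≤ a' + b' + c') (hsum : 3 * a' + 2 * b' + c' = 3 * a + 2 * b + c + 1) :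
    CoversBox (ofCounts (a, b, c)) (ofCounts (a', b', c')) := by
  refine ⟨fun i => ?_, ?_⟩
  · rw [getD_ofCounts, getD_ofCounts]
    split_ifs <;> omega
  · rw [sum_ofCounts, sum_ofCounts, hsum]

lemma complementBox_ofCounts {a b c h : ℕ} (hs : a + b + c ≤ h) :
    complementBox 3 h (ofCounts (a, b, c)) =
      ofCounts (h - (a + b + c), c, b) ++ List.replicate a 0 := by
  refine List.ext_getElem (by simp [complementBox, ofCounts]; omega) fun i hi _ => ?_
  have hih : i < h := by simpa [complementBox] using hi
  rw [← List.getD_eq_getElem _ 0, ← List.getD_eq_getElem _ 0, getD_ofCounts_append_zeros,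
    complementBox, List.getD_eq_getElem _ 0 (by simpa using hih), List.getElem_map,
    List.getElem_range, getD_ofCounts]
  split_ifs <;> omega

/-- Position `n` of the chain with parameters `(m, k)`, as multiplicities of `3, 2, 1`.
The chain starts at `3^m 1^(3m+k)` and turns `1`s into `2`s one at a time until `k` of
them (`k - 2` if `k` is odd) are `2`s; it then repeats a period of three steps: for even `k`
add a `1`, turn it into a `2`, turn a `2` into a `3`; for odd `k` the same steps in reverse
order. -/
def chainPos (m k n : ℕ) : ℕ × ℕ × ℕ :=
  if k % 2 = 0 then
    if n ≤ k then (m, n, 3 * m + k - n)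
    else if (n - (k + 1)) % 3 = 0 then (m + (n - (k + 1)) / 3, k, 3 * m + 1)
    else if (n - (k + 1)) % 3 = 1 then (m + (n - (k + 1)) / 3, k + 1, 3 * m)
    else (m + (n - (k + 1)) / 3 + 1, k, 3 * m)
  else
    if n ≤ k - 2 then (m, n, 3 * m + k - n)
    else if (n - (k - 1)) % 3 = 0 then (m + (n - (k - 1)) / 3 + 1, k - 3, 3 * m + 2)
    else if (n - (k - 1)) % 3 = 1 then (m + (n - (k - 1)) / 3 + 1, k - 2, 3 * m + 1)
    else (m + (n - (k - 1)) / 3 + 1, k - 2, 3 * m + 2)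

def chainLength (h m k : ℕ) : ℕ := 3 * (h - 4 * m - k) + k + 1

def scdChain (h m k : ℕ) : List (List ℕ) :=
  (List.range (chainLength h m k)).map (ofCounts ∘ chainPos m k)

def scdChains (h : ℕ) : Set (List (List ℕ)) :=
  {c | ∃ m k, k ≠ 1 ∧ 4 * m + k ≤ h ∧ scdChain h m k = c}

/-- The inverse of `(m, k, n) ↦ chainPos m k n`. In the first case the partition lies on the
initial segment of its chain, where `c - 3a` `1`s remain to be turned into `2`s. -/
def chainCoords : ℕ × ℕ × ℕ → ℕ × ℕ × ℕ
  | (a, b, c) =>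
    if 3 * a + 2 ≤ c ∨ (3 * a ≤ c ∧ (b + c - 3 * a) % 2 = 0) then (a, b + c - 3 * a, b)
    else if c % 3 = 0 then
      if b % 2 = 0 then (c / 3, b, 3 * (a - c / 3) + b)
      else (c / 3, b - 1, 3 * (a - c / 3) + b + 1)
    else if c % 3 = 1 then
      if b % 2 = 0 then (c / 3, b, 3 * (a - c / 3) + b + 1)
      else (c / 3, b + 2, 3 * (a - c / 3) + b - 1)
    else
      if b % 2 = 0 then (c / 3, b + 3, 3 * (a - c / 3) + b - 1)
      else (c / 3, b + 2, 3 * (a - c / 3) + b)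

section chainPos

variable {h m k n : ℕ}

lemma chainCoords_chainPos (hk : k ≠ 1) : chainCoords (chainPos m k n) = (m, k, n) := by
  unfold chainPos
  split_ifs <;> simp only [chainCoords] <;> split_ifs <;>
    simp only [Prod.mk.injEq, true_and, and_true] <;> omega

lemma chainPos_chainCoords (a b c : ℕ) :
    chainPos (chainCoords (a, b, c)).1 (chainCoords (a, b, c)).2.1
      (chainCoords (a, b, c)).2.2 = (a, b, c) := by
  simp only [chainCoords]
  split_ifs <;> simp only [chainPos] <;> split_ifs <;>
    simp only [Prod.mk.injEq, true_and] <;> omega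

lemma exists_chainPos_eq {a b c : ℕ} (hs : a + b + c ≤ h) :
    ∃ m k n, k ≠ 1 ∧ 4 * m + k ≤ h ∧ n < chainLength h m k ∧
      chainPos m k n = (a, b, c) := by
  refine ⟨_, _, _, ?_, ?_, ?_, chainPos_chainCoords a b c⟩ <;>
    simp only [chainCoords, chainLength] <;> split_ifs <;>
    dsimp only <;> omega

lemma chainPos_sum_le (hk : k ≠ 1) (hbox : 4 * m + k ≤ h) (hn : n < chainLength h m k) :
    (chainPos m k n).1 + (chainPos m k n).2.1 + (chainPos m k n).2.2 ≤ h := by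
  unfold chainLength at hn
  unfold chainPos
  split_ifs <;> simp only <;> omega

lemma coversBox_chainPos_succ (hk : k ≠ 1) :
    CoversBox (ofCounts (chainPos m k n)) (ofCounts (chainPos m k (n + 1))) := by
  unfold chainPos
  split_ifs <;> apply coversBox_ofCounts <;> omega

end chainPos

section scdChain

variable {h m k : ℕ}

lemma mem_scdChain {l : List ℕ} :
    l ∈ scdChain h m k ↔ ∃ n < chainLength h m k, ofCounts (chainPos m k n) = l := by
  simp [scdChain]

lemma chainCoords_eq_of_mem_scdChain (hk : k ≠ 1) {a b c : ℕ}
    (hl : ofCounts (a, b, c) ∈ scdChain h m k) :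
    ((chainCoords (a, b, c)).1, (chainCoords (a, b, c)).2.1) = (m, k) := by
  obtain ⟨n, -, hn⟩ := mem_scdChain.1 hl
  rw [← ofCounts_injective hn, chainCoords_chainPos hk]

lemma mem_boxSet_of_mem_scdChain (hk : k ≠ 1) (hbox : 4 * m + k ≤ h) {l : List ℕ}
    (hl : l ∈ scdChain h m k) : l ∈ boxSet 3 h := by
  obtain ⟨n, hn, rfl⟩ := mem_scdChain.1 hl
  exact mem_boxSet_three_iff.2 ⟨_, _, _, chainPos_sum_le hk hbox hn, rfl⟩

lemma isChain_scdChain (hk : k ≠ 1) : (scdChain h m k).IsChain CoversBox := by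
  rw [scdChain, List.isChain_map, List.isChain_range]
  exact fun n _ => coversBox_chainPos_succ hk

lemma headI_scdChain : (scdChain h m k).headI = ofCounts (m, 0, 3 * m + k) := by
  have hpos : chainPos m k 0 = (m, 0, 3 * m + k) := by
    unfold chainPos
    split_ifs <;> simp only [Prod.mk.injEq, true_and] <;> omega
  rw [scdChain, chainLength, List.range_succ_eq_map, List.map_cons, List.headI_cons,
    Function.comp_apply, hpos]

lemma getLastD_scdChain (hbox : 4 * m + k ≤ h) :
    (scdChain h m k).getLastD [] =
      if k % 2 = 0 then ofCounts (h - k - 3 * m, k, 3 * m)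
      else ofCounts (h - k - 3 * m + 1, k - 2, 3 * m + 1) := by
  have hpos : chainPos m k (3 * (h - 4 * m - k) + k) =
      if k % 2 = 0 then (h - k - 3 * m, k, 3 * m)
      else (h - k - 3 * m + 1, k - 2, 3 * m + 1) := by
    unfold chainPos
    split_ifs <;> simp only [Prod.mk.injEq, and_true] <;> omega
  rw [scdChain, chainLength, List.range_succ, List.map_append, List.map_singleton,
    List.getLastD_concat, Function.comp_apply, hpos, apply_ite ofCounts]

end scdChain

theorem isSCD_scdChains (h : ℕ) : IsSCD 3 h (scdChains h) where
  nonempty := by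
    rintro _ ⟨m, k, -, -, rfl⟩
    simp [scdChain, chainLength]
  subset := by
    rintro _ ⟨m, k, hk, hbox, rfl⟩ l hl
    exact mem_boxSet_of_mem_scdChain hk hbox hl
  saturated := by
    rintro _ ⟨m, k, hk, -, rfl⟩
    exact isChain_scdChain hk
  symm := by
    rintro _ ⟨m, k, hk, hbox, rfl⟩
    rw [headI_scdChain, getLastD_scdChain hbox]
    split_ifs <;> simp only [sum_ofCounts] <;> omega
  partitioned := by
    intro l hl
    obtain ⟨a, b, c, hs, rfl⟩ := mem_boxSet_three_iff.1 hl
    obtain ⟨m, k, n, hk, hbox, hn, hpos⟩ := exists_chainPos_eq hs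
    have hmem : ofCounts (a, b, c) ∈ scdChain h m k := mem_scdChain.2 ⟨n, hn, by rw [hpos]⟩
    refine ⟨scdChain h m k, ⟨⟨m, k, hk, hbox, rfl⟩, hmem⟩, ?_⟩
    rintro _ ⟨⟨m', k', hk', -, rfl⟩, hmem'⟩
    obtain ⟨rfl, rfl⟩ := Prod.mk.inj <|
      (chainCoords_eq_of_mem_scdChain hk' hmem').symm.trans (chainCoords_eq_of_mem_scdChain hk hmem)
    rfl

lemma ofCounts_no_twos (a c : ℕ) :
    ofCounts (a, 0, c) = List.replicate a 3 ++ List.replicate c 1 := by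
  simp [ofCounts]

lemma exists_headI_eq_iff {h : ℕ} {l : List ℕ} :
    (∃ c ∈ scdChains h, c.headI = l) ↔
      l ∈ boxSet 3 h ∧ ∃ m3 m1 : ℕ, l = List.replicate m3 3 ++ List.replicate m1 1 ∧
        3 * m3 ≤ m1 ∧ m1 ≠ 3 * m3 + 1 := by
  constructor
  · rintro ⟨_, ⟨m, k, hk, hbox, rfl⟩, rfl⟩
    rw [headI_scdChain]
    exact ⟨mem_boxSet_three_iff.2 ⟨m, 0, 3 * m + k, by omega, rfl⟩, m, 3 * m + k,
      ofCounts_no_twos .., by omega, by omega⟩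
  · rintro ⟨hl, m3, m1, rfl, hle, hne⟩
    have hlen : m3 + m1 ≤ h := by simpa using hl.2.2
    refine ⟨_, ⟨m3, m1 - 3 * m3, by omega, by omega, rfl⟩, ?_⟩
    rw [headI_scdChain, ← ofCounts_no_twos, Nat.add_sub_cancel' hle]

lemma getLastD_eq_of_headI_eq {h : ℕ} {c : List (List ℕ)} (hc : c ∈ scdChains h) {m3 m1 : ℕ}
    (hhead : c.headI = List.replicate m3 3 ++ List.replicate (m1 + 3 * m3) 1) :
    c.getLastD [] =
      if Even m1 then ofCounts (h - m1 - 3 * m3, m1, 3 * m3)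
      else ofCounts (h - m1 - 3 * m3 + 1, m1 - 2, 3 * m3 + 1) := by
  obtain ⟨m, k, -, hbox, rfl⟩ := hc
  rw [headI_scdChain, ← ofCounts_no_twos] at hhead
  have hcounts := ofCounts_injective hhead
  simp only [Prod.mk.injEq] at hcounts
  obtain ⟨rfl, -, hk⟩ := hcounts
  obtain rfl : k = m1 := by omega
  simp only [getLastD_scdChain hbox, Nat.even_iff]

lemma complementBox_ofCounts_eq_iff {h a b c m2 m1 : ℕ} (hs : a + b + c ≤ h) :
    complementBox 3 h (ofCounts (a, b, c)) =
        List.replicate m2 2 ++ List.replicate m1 1 ++ List.replicate (h - m2 - m1) 0 ↔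
      a + b + c = h ∧ c = m2 ∧ b = m1 := by
  have hrhs : List.replicate m2 2 ++ List.replicate m1 1 ++ List.replicate (h - m2 - m1) 0 =
      ofCounts (0, m2, m1) ++ List.replicate (h - m2 - m1) 0 := by
    simp [ofCounts]
  rw [complementBox_ofCounts hs, hrhs]
  constructor
  · intro heq
    have := @ofCounts_append_zeros_injective (_, _) (_, _) heq
    simp only [Prod.mk.injEq] at this
    omega
  · rintro ⟨hsum, rfl, rfl⟩
    rw [show h - (a + b + c) = 0 by omega, show h - c - b = a by omega]

lemma exists_getLastD_eq_iff {h : ℕ} {l : List ℕ} :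
    (∃ c ∈ scdChains h, c.getLastD [] = l) ↔
      l ∈ boxSet 3 h ∧ ∃ m2 m1 : ℕ,
        complementBox 3 h l = List.replicate m2 2 ++ List.replicate m1 1 ++
          List.replicate (h - m2 - m1) 0 ∧
        3 * m1 + 4 * m2 ≤ 3 * h ∧ (Even m1 ↔ m2 % 3 = 0) ∧ (¬ Even m1 ↔ m2 % 3 = 1) := by
  simp only [Nat.even_iff]
  constructor
  · rintro ⟨_, ⟨m, k, hk, hbox, rfl⟩, rfl⟩
    rw [getLastD_scdChain hbox]
    split_ifs with hk2
    · exact ⟨mem_boxSet_three_iff.2 ⟨_, _, _, by omega, rfl⟩, 3 * m, k,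
        (complementBox_ofCounts_eq_iff (by omega)).2 ⟨by omega, rfl, rfl⟩, by omega, by omega,
        by omega⟩
    · exact ⟨mem_boxSet_three_iff.2 ⟨_, _, _, by omega, rfl⟩, 3 * m + 1, k - 2,
        (complementBox_ofCounts_eq_iff (by omega)).2 ⟨by omega, rfl, rfl⟩, by omega, by omega,
        by omega⟩
  · rintro ⟨hl, m2, m1, hcomp, hineq, heven, hodd⟩
    obtain ⟨a, b, c, hs, rfl⟩ := mem_boxSet_three_iff.1 hl
    obtain ⟨hsum, rfl, rfl⟩ := (complementBox_ofCounts_eq_iff hs).1 hcomp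
    rcases Nat.mod_two_eq_zero_or_one b with hb | hb
    · have hc := heven.1 hb
      refine ⟨_, ⟨c / 3, b, by omega, by omega, rfl⟩, ?_⟩
      rw [getLastD_scdChain (by omega), if_pos hb]
      congr 1
      simp only [Prod.mk.injEq, true_and]
      omega
    · have hc := hodd.1 (by omega)
      refine ⟨_, ⟨c / 3, b + 2, by omega, by omega, rfl⟩, ?_⟩
      rw [getLastD_scdChain (by omega), if_neg (by omega)]
      congr 1
      simp only [Prod.mk.injEq]
      omega

theorem scd_L3_min_max_general (h : ℕ) :
    ∃ C : Set (List (List ℕ)),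
      IsSCD 3 h C ∧
      (∀ l : List ℕ,
        (∃ c ∈ C, c.headI = l) ↔
          (l ∈ boxSet 3 h ∧ ∃ m3 m1 : ℕ,
            l = List.replicate m3 3 ++ List.replicate m1 1 ∧
            3 * m3 ≤ m1 ∧ m1 ≠ 3 * m3 + 1)) ∧
      (∀ c ∈ C, ∀ m3 m1 : ℕ, m1 ≠ 1 →
        c.headI = List.replicate m3 3 ++ List.replicate (m1 + 3 * m3) 1 →
        (Even m1 →
          c.getLastD [] = List.replicate (h - m1 - 3 * m3) 3 ++
            List.replicate m1 2 ++ List.replicate (3 * m3) 1) ∧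
        (¬ Even m1 →
          c.getLastD [] = List.replicate (h - m1 - 3 * m3 + 1) 3 ++
            List.replicate (m1 - 2) 2 ++ List.replicate (3 * m3 + 1) 1)) ∧
      (∀ l : List ℕ,
        (∃ c ∈ C, c.getLastD [] = l) ↔
          (l ∈ boxSet 3 h ∧ ∃ m2 m1 : ℕ,
            complementBox 3 h l = List.replicate m2 2 ++ List.replicate m1 1 ++
              List.replicate (h - m2 - m1) 0 ∧
            3 * m1 + 4 * m2 ≤ 3 * h ∧
            (Even m1 ↔ m2 % 3 = 0) ∧ (¬ Even m1 ↔ m2 % 3 = 1))) := by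
  refine ⟨scdChains h, isSCD_scdChains h, fun _ => exists_headI_eq_iff,
    fun c hc m3 m1 _ hhead => ?_, fun _ => exists_getLastD_eq_iff⟩
  rw [getLastD_eq_of_headI_eq hc hhead]
  exact ⟨fun he => if_pos he, fun ho => if_neg ho⟩

/-- For every h ≥ 1 there is a symmetric chain decomposition 𝒞 of
L(3,h) such that: (a) the minimal elements of its chains are exactly the partitions in
L(3,h) of the form 3^{m₃} 1^{m₁} with m₁ ≥ 3 m₃ and m₁ ≠ 3 m₃ + 1; (b) the chain with
minimal element 3^{m₃} 1^{m₁+3m₃} (m₁ ≠ 1) has maximal element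
3^{h−m₁−3m₃} 2^{m₁} 1^{3m₃} if m₁ is even and 3^{h−m₁−3m₃+1} 2^{m₁−2} 1^{3m₃+1} if m₁ is
odd; (c) the maximal elements of its chains are exactly the partitions of L(3,h) whose
complement in the 3 × h box has the form 2^{m₂} 1^{m₁} with 3 m₁ + 4 m₂ ≤ 3h,
m₁ even ↔ m₂ ≡ 0 (mod 3), and m₁ odd ↔ m₂ ≡ 1 (mod 3). -/
theorem scd_L3_min_max (h : ℕ) (hh : 1 ≤ h) :
    ∃ C : Set (List (List ℕ)),
      IsSCD 3 h C ∧
      (∀ l : List ℕ,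
        (∃ c ∈ C, c.headI = l) ↔
          (l ∈ boxSet 3 h ∧ ∃ m3 m1 : ℕ,
            l = List.replicate m3 3 ++ List.replicate m1 1 ∧
            3 * m3 ≤ m1 ∧ m1 ≠ 3 * m3 + 1)) ∧
      (∀ c ∈ C, ∀ m3 m1 : ℕ, m1 ≠ 1 →
        c.headI = List.replicate m3 3 ++ List.replicate (m1 + 3 * m3) 1 →
        (Even m1 →
          c.getLastD [] = List.replicate (h - m1 - 3 * m3) 3 ++
            List.replicate m1 2 ++ List.replicate (3 * m3) 1) ∧
        (¬ Even m1 →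
          c.getLastD [] = List.replicate (h - m1 - 3 * m3 + 1) 3 ++
            List.replicate (m1 - 2) 2 ++ List.replicate (3 * m3 + 1) 1)) ∧
      (∀ l : List ℕ,
        (∃ c ∈ C, c.getLastD [] = l) ↔
          (l ∈ boxSet 3 h ∧ ∃ m2 m1 : ℕ,
            complementBox 3 h l = List.replicate m2 2 ++ List.replicate m1 1 ++
              List.replicate (h - m2 - m1) 0 ∧
            3 * m1 + 4 * m2 ≤ 3 * h ∧
            (Even m1 ↔ m2 % 3 = 0) ∧ (¬ Even m1 ↔ m2 % 3 = 1))) :=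
  scd_L3_min_max_general h
end
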